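/- arXiv:0904.4713 — 5 statements merged into one kernel-verified Lean document; each statement's English description precedes it below -/
import Mathlib

section
/- Let w = x^3 + y^3 + z^3 - 3xyz over ℂ and let (a,b,c) ∈ (ℂ*)^3 satisfy w(a,b,c) = 0. Then the 3×3 matrix φ over ℂ[x,y,z] with rows (ax, cy, bz), (cz, bx, ay), (by, az, cx) has determinant equal to abc·w. Consequently, setting ψ = (1/(abc))·adj(φ) (the adjugate), the pair (φ, ψ) satisfies φψ = ψφ = w·I₃, i.e. it is a rank-3 matrix factorization of w. -/
open MvPolynomial Matrix

/-- For `w = x³+y³+z³-3xyz` and `(a,b,c) ∈ (ℂ*)³` with `w(a,b,c) = 0`, the matrix `φ` with rows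
`(ax, cy, bz)`, `(cz, bx, ay)`, `(by, az, cx)` has `det φ = abc·w`, and with
`ψ = (abc)⁻¹·adj(φ)` the pair `(φ, ψ)` is a rank-3 matrix factorization of `w`. -/
theorem elliptic_curve_matrix_factorization (a b c : ℂ)
    (ha : a ≠ 0) (hb : b ≠ 0) (hc : c ≠ 0)
    (habc : a ^ 3 + b ^ 3 + c ^ 3 - 3 * a * b * c = 0) :
    let x : MvPolynomial (Fin 3) ℂ := X 0
    let y : MvPolynomial (Fin 3) ℂ := X 1
    let z : MvPolynomial (Fin 3) ℂ := X 2
    let w : MvPolynomial (Fin 3) ℂ := x ^ 3 + y ^ 3 + z ^ 3 - 3 * x * y * z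
    let φ : Matrix (Fin 3) (Fin 3) (MvPolynomial (Fin 3) ℂ) :=
      !![C a * x, C c * y, C b * z;
         C c * z, C b * x, C a * y;
         C b * y, C a * z, C c * x]
    let ψ : Matrix (Fin 3) (Fin 3) (MvPolynomial (Fin 3) ℂ) :=
      (C ((a * b * c)⁻¹) : MvPolynomial (Fin 3) ℂ) • φ.adjugate
    φ.det = C (a * b * c) * w ∧ φ * ψ = w • 1 ∧ ψ * φ = w • 1 := by
  intro x y z w φ ψ
  have h3 : a ^ 3 + b ^ 3 + c ^ 3 = 3 * a * b * c := by linear_combination habc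
  have hdet : φ.det = C (a * b * c) * w := by
    show (!![C a * x, C c * y, C b * z;
         C c * z, C b * x, C a * y;
         C b * y, C a * z, C c * x] : Matrix (Fin 3) (Fin 3) _).det = C (a * b * c) * w
    rw [Matrix.det_fin_three]
    simp only [Matrix.cons_val', Matrix.cons_val_zero, Matrix.cons_val_one, Matrix.head_cons,
      Matrix.empty_val', Matrix.cons_val_fin_one, Matrix.head_fin_const, Matrix.cons_val_two,
      Matrix.tail_cons, Matrix.of_apply]
    have hC : (C (a ^ 3 + b ^ 3 + c ^ 3) : MvPolynomial (Fin 3) ℂ)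
        = C (3 * a * b * c) := by rw [h3]
    simp only [C_add, C_mul, C_pow, map_ofNat] at hC
    simp only [C_mul]
    linear_combination (-(x * y * z)) * hC
  have habc' : (a * b * c) ≠ 0 := by
    simp [ha, hb, hc]
  have hinv : (C ((a*b*c)⁻¹) : MvPolynomial (Fin 3) ℂ) * C (a*b*c) = 1 := by
    rw [← C_mul, inv_mul_cancel₀ habc', C_1]
  refine ⟨hdet, ?_, ?_⟩
  · show φ * ((C ((a * b * c)⁻¹) : MvPolynomial (Fin 3) ℂ) • φ.adjugate) = w • 1
    rw [Matrix.mul_smul, Matrix.mul_adjugate, hdet, smul_smul, ← mul_assoc, hinv, one_mul]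
  · show ((C ((a * b * c)⁻¹) : MvPolynomial (Fin 3) ℂ) • φ.adjugate) * φ = w • 1
    rw [Matrix.smul_mul, Matrix.adjugate_mul, hdet, smul_smul, ← mul_assoc, hinv, one_mul]
end

section
/- Let R be a commutative ring, w ∈ R, S = R/(w), and let (φ : X^1 → X^0, ψ : X^0 → X^1) be a matrix factorization of w with M = coker(φ). Then the 2-periodic sequence of S-modules ⋯ → X̄^0 →ψ̄ X̄^1 →φ̄ X̄^0 → M → 0, obtained by reducing φ and ψ modulo w and extending periodically, is exact, provided w is a nonzerodivisor in R. -/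
lemma aux_mem_wsmul_top {R : Type} [CommRing R] {w : R} {M : Type} [AddCommGroup M]
    [Module R M] (x : M) :
    x ∈ (Ideal.span {w} : Ideal R) • (⊤ : Submodule R M) ↔ ∃ z : M, x = w • z := by
  constructor
  · intro hx
    refine Submodule.smul_induction_on hx ?_ ?_
    · rintro r hr m -
      obtain ⟨a, rfl⟩ := Ideal.mem_span_singleton'.1 hr
      exact ⟨a • m, by rw [mul_smul, smul_comm]⟩
    · rintro x y ⟨z1, rfl⟩ ⟨z2, rfl⟩
      exact ⟨z1 + z2, (smul_add _ _ _).symm⟩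
  · rintro ⟨z, rfl⟩
    exact Submodule.smul_mem_smul (Ideal.mem_span_singleton_self w) trivial

lemma aux_smul_cancel {R : Type} [CommRing R] {w : R} (hw : w ∈ nonZeroDivisors R)
    {M : Type} [AddCommGroup M] [Module R M] [Module.Free R M]
    {x y : M} (h : w • x = w • y) : x = y := by
  classical
  have b := Module.Free.chooseBasis R M
  apply b.repr.injective
  ext i
  have h2 := congrArg (fun z => b.repr z i) h
  simp only [map_smul, Finsupp.smul_apply, smul_eq_mul] at h2
  exact (mul_cancel_left_mem_nonZeroDivisors hw).1 h2

/-- Let `(φ, ψ)` be a matrix factorization of a nonzerodivisor `w` on finite free `R`-modules,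
and `M = coker φ`.  Then the 2-periodic sequence of `S = R/(w)`-modules
`⋯ → X̄⁰ → X̄¹ → X̄⁰ → M → 0` obtained by reducing `φ, ψ` modulo `w` is exact.
Exactness is expressed elementwise: the kernel of each reduced map (an element maps into
`wX`) equals the image of the previous one together with `wX`; exactness at the augmentation
spot amounts to `range φ + wX⁰ = range φ` (so that `X̄⁰ → M` has kernel the image of `φ̄`),
and the augmentation `X̄⁰ → M = coker φ` is surjective by construction. -/
theorem matrix_factorization_two_periodic_resolution
    {R : Type} [CommRing R] {w : R} (hw : w ∈ nonZeroDivisors R)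
    (X0 X1 : Type) [AddCommGroup X0] [Module R X0] [Module.Free R X0] [Module.Finite R X0]
    [AddCommGroup X1] [Module R X1] [Module.Free R X1] [Module.Finite R X1]
    (φ : X1 →ₗ[R] X0) (ψ : X0 →ₗ[R] X1)
    (hφψ : φ.comp ψ = w • LinearMap.id)
    (hψφ : ψ.comp φ = w • LinearMap.id) :
    (∀ x : X1, φ x ∈ (Ideal.span {w} : Ideal R) • (⊤ : Submodule R X0) ↔
        x ∈ LinearMap.range ψ ⊔ (Ideal.span {w} : Ideal R) • (⊤ : Submodule R X1)) ∧
    (∀ y : X0, ψ y ∈ (Ideal.span {w} : Ideal R) • (⊤ : Submodule R X1) ↔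
        y ∈ LinearMap.range φ ⊔ (Ideal.span {w} : Ideal R) • (⊤ : Submodule R X0)) ∧
    LinearMap.range φ ⊔ (Ideal.span {w} : Ideal R) • (⊤ : Submodule R X0) =
      LinearMap.range φ := by
  have hφψ' : ∀ y : X0, φ (ψ y) = w • y := fun y => congrFun (congrArg DFunLike.coe hφψ) y
  have hψφ' : ∀ x : X1, ψ (φ x) = w • x := fun x => congrFun (congrArg DFunLike.coe hψφ) x
  refine ⟨?_, ?_, ?_⟩
  · intro x
    rw [aux_mem_wsmul_top]
    constructor
    · rintro ⟨z, hz⟩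
      have : w • x = w • ψ z := by
        rw [← hψφ' x, hz, map_smul]
      have hx : x = ψ z := aux_smul_cancel hw this
      exact Submodule.mem_sup_left ⟨z, hx.symm⟩
    · intro hx
      rw [Submodule.mem_sup] at hx
      obtain ⟨a, ⟨y, rfl⟩, b, hb, rfl⟩ := hx
      rw [aux_mem_wsmul_top] at hb
      obtain ⟨z, rfl⟩ := hb
      refine ⟨y + φ z, ?_⟩
      rw [map_add, map_smul, hφψ' y, smul_add]
  · intro y
    rw [aux_mem_wsmul_top]
    constructor
    · rintro ⟨z, hz⟩
      have : w • y = w • φ z := by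
        rw [← hφψ' y, hz, map_smul]
      have hy : y = φ z := aux_smul_cancel hw this
      exact Submodule.mem_sup_left ⟨z, hy.symm⟩
    · intro hy
      rw [Submodule.mem_sup] at hy
      obtain ⟨a, ⟨x, rfl⟩, b, hb, rfl⟩ := hy
      rw [aux_mem_wsmul_top] at hb
      obtain ⟨z, rfl⟩ := hb
      refine ⟨x + ψ z, ?_⟩
      rw [map_add, map_smul, hψφ' x, smul_add]
  · refine le_antisymm (sup_le le_rfl ?_) le_sup_left
    intro y hy
    rw [aux_mem_wsmul_top] at hy
    obtain ⟨z, rfl⟩ := hy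
    exact ⟨ψ z, hφψ' z⟩
end

section
/- Let R be a regular local ring, w ∈ 𝔪 nonzero, S = R/(w), and 0 → X^1 →φ X^0 → M → 0 an R-free resolution of an S-module M. Then there exists an R-linear map ψ : X^0 → X^1 such that φψ = w·id_{X^0} and ψφ = w·id_{X^1}. -/
/-- A Noetherian local ring is regular if its maximal ideal is generated by
`dim R` elements. -/
def IsRegularLocal (R : Type) [CommRing R] [IsLocalRing R] : Prop :=
  IsNoetherianRing R ∧ ∃ s : Finset R, Ideal.span (s : Set R) = IsLocalRing.maximalIdeal R ∧
    (s.card : WithBot (WithTop ℕ)) = ringKrullDim R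

/-- Let `R` be regular local, `0 ≠ w ∈ 𝔪`, and `0 → X¹ →φ X⁰ →π M → 0` an `R`-free
resolution of a module `M` annihilated by `w` (an `S = R/(w)`-module).  Then there is
`ψ : X⁰ → X¹` with `φψ = w·id` and `ψφ = w·id`. -/
theorem free_resolution_yields_matrix_factorization
    {R : Type} [CommRing R] [IsLocalRing R] (hreg : IsRegularLocal R)
    {w : R} (hw : w ∈ IsLocalRing.maximalIdeal R) (hw0 : w ≠ 0)
    (X0 X1 M : Type) [AddCommGroup X0] [Module R X0] [Module.Free R X0] [Module.Finite R X0]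
    [AddCommGroup X1] [Module R X1] [Module.Free R X1] [Module.Finite R X1]
    [AddCommGroup M] [Module R M]
    (φ : X1 →ₗ[R] X0) (π : X0 →ₗ[R] M)
    (hinj : Function.Injective φ) (hexact : Function.Exact φ π)
    (hsurj : Function.Surjective π)
    (hann : ∀ m : M, w • m = 0) :
    ∃ ψ : X0 →ₗ[R] X1,
      φ.comp ψ = w • LinearMap.id ∧ ψ.comp φ = w • LinearMap.id := by
  have hmem : ∀ x : X0, w • x ∈ LinearMap.range φ := by
    intro x
    have : π (w • x) = 0 := by rw [map_smul, hann]
    exact (hexact (w • x)).mp this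
  let e := LinearEquiv.ofInjective φ hinj
  let ψ : X0 →ₗ[R] X1 :=
    e.symm.toLinearMap.comp ((w • (LinearMap.id : X0 →ₗ[R] X0)).codRestrict
      (LinearMap.range φ) hmem)
  have hφψ : ∀ x : X0, φ (ψ x) = w • x := by
    intro x
    show φ (e.symm ⟨w • x, hmem x⟩) = w • x
    have h1 := congrArg Subtype.val (e.apply_symm_apply ⟨w • x, hmem x⟩)
    have h2 : φ (e.symm ⟨w • x, hmem x⟩) = ((e (e.symm ⟨w • x, hmem x⟩)) : X0) :=
      (LinearEquiv.ofInjective_apply φ _).symm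
    rw [h2, h1]
  refine ⟨ψ, ?_, ?_⟩
  · ext x; simpa using hφψ x
  · ext y
    apply hinj
    simp [hφψ (φ y), map_smul]
end

section
/- Let R be a commutative ring with derivation ∂, w ∈ R, and (φ, ψ) a matrix factorization of w (φψ = ψφ = w·id). Then ∂(w)·id_{X^0} = ∂(φ)∘ψ + φ∘∂(ψ), where ∂(φ), ∂(ψ) denote entrywise application of ∂ to the matrices. In particular, multiplication by ∂(w) on the complex Hom(X,X) is null-homotopic. -/
/-- Leibniz rule for matrix factorizations: if `D` is a derivation of `R` and `(φ, ψ)` is a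
matrix factorization of `w` (`φψ = ψφ = w·id` as square matrices), then
`∂(w)·1 = ∂(φ)·ψ + φ·∂(ψ)`, where `∂(φ)` denotes entrywise application of `D`. -/
theorem derivation_matrix_factorization
    {R : Type} [CommRing R] (D : Derivation ℤ R R) (w : R)
    {m n : ℕ} (φ : Matrix (Fin m) (Fin n) R) (ψ : Matrix (Fin n) (Fin m) R)
    (hφψ : φ * ψ = w • (1 : Matrix (Fin m) (Fin m) R))
    (hψφ : ψ * φ = w • (1 : Matrix (Fin n) (Fin n) R)) :
    D w • (1 : Matrix (Fin m) (Fin m) R) = φ.map D * ψ + φ * ψ.map D := by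
  ext i j
  have h := congrArg (fun M : Matrix (Fin m) (Fin m) R => D (M i j)) hφψ
  simp only [Matrix.mul_apply, Matrix.smul_apply, Matrix.one_apply, smul_eq_mul] at h ⊢
  rw [map_sum] at h
  simp only [Derivation.leibniz, smul_eq_mul] at h
  rw [Finset.sum_add_distrib] at h
  by_cases hij : i = j <;>
    simp [hij, Matrix.mul_apply, Matrix.map_apply, mul_comm] at h ⊢ <;>
    linear_combination -h
end

section
/- Let k be a field with char(k) ≠ 2, and let w = Σᵢ₌₁ⁿ aᵢxᵢ² be a diagonal quadratic form. In the differential graded algebra A = R⟨θ₁,…,θₙ,∂₁,…,∂ₙ⟩ of polynomial differential operators on R⟨θ₁,…,θₙ⟩ (R = k[[x₁,…,xₙ]]) with differential [δ,−] where δ = Σᵢ(xᵢ∂ᵢ + aᵢxᵢθᵢ), the elements ∂̄ᵢ = ∂ᵢ − aᵢθᵢ are cycles satisfying ∂̄ᵢ² = −aᵢ and ∂̄ᵢ∂̄ⱼ = −∂̄ⱼ∂̄ᵢ for i ≠ j; hence they generate a subalgebra of A^op isomorphic to the Clifford algebra Cl(w) of the quadratic form w. -/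
/-!
The three relations are formal consequences of the canonical anticommutation relations between
exterior multiplications `θᵢ` and contractions `∂ᵢ`.

For the embedding, changing the quadratic form identifies `Cl_R(w)` with `⋀ Rⁿ` as an
`R`-module, turning left multiplication by `eᵢ` into `θᵢ - aᵢ∂ᵢ`. Conjugation by the unit
`U = ∏ⱼ (θⱼ + ∂ⱼ)γ`, where `γ` is the parity involution, sends `θᵢ ↦ -∂ᵢ` and `∂ᵢ ↦ -θᵢ`,
hence `θᵢ - aᵢ∂ᵢ ↦ -∂̄ᵢ`. So `eᵢ ↦ ∂̄ᵢ` is the left regular representation of `Cl_R(w)`,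
twisted by the grade involution and a conjugation, composed with `Cl_k(w) → Cl_R(w)`; the
latter is injective because following it by `Cl_R(w) → R ⊗ₖ Cl_k(w)` gives `x ↦ 1 ⊗ x`.
-/

open CliffordAlgebra

theorem Finset.sum_mul_self_of_anticommute {ι S : Type*} [Ring S] (s : Finset ι) (x : ι → S)
    (h : ∀ i ∈ s, ∀ j ∈ s, i ≠ j → x i * x j = -(x j * x i)) :
    (∑ i ∈ s, x i) * (∑ i ∈ s, x i) = ∑ i ∈ s, x i * x i := by
  classical
  induction s using Finset.induction_on with
  | empty => simp
  | insert a s ha ih =>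
    have hcross : x a * ∑ i ∈ s, x i + (∑ i ∈ s, x i) * x a = 0 := by
      rw [Finset.mul_sum, Finset.sum_mul, ← Finset.sum_add_distrib]
      refine Finset.sum_eq_zero fun j hj => ?_
      have haj : a ≠ j := (ne_of_mem_of_not_mem hj ha).symm
      rw [h a (s.mem_insert_self a) j (Finset.mem_insert_of_mem hj) haj, neg_add_cancel]
    rw [Finset.sum_insert ha, Finset.sum_insert ha, ← ih fun i hi j hj =>
      h i (Finset.mem_insert_of_mem hi) j (Finset.mem_insert_of_mem hj)]
    calc (x a + ∑ i ∈ s, x i) * (x a + ∑ i ∈ s, x i)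
        = x a * x a + (x a * ∑ i ∈ s, x i + (∑ i ∈ s, x i) * x a) +
            (∑ i ∈ s, x i) * ∑ i ∈ s, x i := by noncomm_ring
      _ = _ := by rw [hcross, add_zero]

theorem List.Nodup.prod_map_mul_eq_mul_prod_map {ι M : Type*} [Monoid M] {f : ι → M} {x y : M}
    {l : List ι} (hl : l.Nodup) {i : ι} (hi : i ∈ l) (hfi : f i * x = y * f i)
    (hx : ∀ j, j ≠ i → Commute (f j) x) (hy : ∀ j, j ≠ i → Commute (f j) y) :
    (l.map f).prod * x = y * (l.map f).prod := by
  induction l with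
  | nil => simp at hi
  | cons j l ih =>
    obtain ⟨hjl, hl⟩ := List.nodup_cons.mp hl
    rw [List.map_cons, List.prod_cons]
    rcases eq_or_ne j i with rfl | hji
    · have hcomm : ∀ z, (∀ k, k ≠ j → Commute (f k) z) → Commute (l.map f).prod z :=
        fun z hz => Commute.list_prod_left _ _ fun u hu => by
          obtain ⟨k, hk, rfl⟩ := List.mem_map.mp hu
          exact hz k fun hkj => hjl (hkj ▸ hk)
      rw [mul_assoc, (hcomm x hx).eq, ← mul_assoc, hfi, mul_assoc]
    · have hil : i ∈ l := (List.mem_cons.mp hi).resolve_left (Ne.symm hji)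
      rw [mul_assoc, ih hl hil, ← mul_assoc, (hy j hji).eq, mul_assoc]

/-- The canonical anticommutation relations `{θᵢ, θⱼ} = {Dᵢ, Dⱼ} = 0`, `{Dᵢ, θⱼ} = δᵢⱼ`; the
diagonal cases of the first two are stated as `θᵢ² = Dᵢ² = 0`, which does not need `2` to be
invertible. -/
structure IsCAR {σ S : Type*} [Ring S] (θ D : σ → S) : Prop where
  theta_mul_self (i : σ) : θ i * θ i = 0
  del_mul_self (i : σ) : D i * D i = 0
  theta_anticomm {i j : σ} : i ≠ j → θ i * θ j = -(θ j * θ i)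
  del_anticomm {i j : σ} : i ≠ j → D i * D j = -(D j * D i)
  del_theta_self (i : σ) : D i * θ i + θ i * D i = 1
  del_theta_anticomm {i j : σ} : i ≠ j → D i * θ j = -(θ j * D i)

structure IsParityOperator {σ S : Type*} [Ring S] (γ : S) (θ D : σ → S) : Prop where
  mul_self : γ * γ = 1
  anticomm_theta (i : σ) : γ * θ i = -(θ i * γ)
  anticomm_del (i : σ) : γ * D i = -(D i * γ)

theorem IsParityOperator.swap {σ S : Type*} [Ring S] {γ : S} {θ D : σ → S}
    (hγ : IsParityOperator γ θ D) : IsParityOperator γ D θ where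
  mul_self := hγ.mul_self
  anticomm_theta := hγ.anticomm_del
  anticomm_del := hγ.anticomm_theta

namespace IsCAR

variable {σ S : Type*} [Ring S] {γ : S} {θ D : σ → S}

theorem swap (h : IsCAR θ D) : IsCAR D θ where
  theta_mul_self := h.del_mul_self
  del_mul_self := h.theta_mul_self
  theta_anticomm := h.del_anticomm
  del_anticomm := h.theta_anticomm
  del_theta_self i := by rw [add_comm, h.del_theta_self]
  del_theta_anticomm hij := by rw [h.del_theta_anticomm hij.symm, neg_neg]

section Scalars

variable {R : Type*} [CommRing R] [Algebra R S]

theorem anticomm_add_smul_self (h : IsCAR θ D) (i : σ) (p q : R) :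
    (D i + p • θ i) * (D i + q • θ i) + (D i + q • θ i) * (D i + p • θ i) = (p + q) • 1 := by
  simp only [add_mul, mul_add, smul_mul_assoc, mul_smul_comm, h.del_mul_self,
    h.theta_mul_self, smul_zero, zero_add, add_zero, ← h.del_theta_self i, smul_add, add_smul]
  abel

theorem anticomm_add_smul_of_ne (h : IsCAR θ D) {i j : σ} (hij : i ≠ j) (p q : R) :
    (D i + p • θ i) * (D j + q • θ j) + (D j + q • θ j) * (D i + p • θ i) = 0 := by
  simp only [add_mul, mul_add, smul_mul_assoc, mul_smul_comm,
    h.del_anticomm hij, h.theta_anticomm hij, h.del_theta_anticomm hij,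
    h.del_theta_anticomm hij.symm, smul_neg, smul_add, smul_comm q p]
  abel

theorem add_smul_mul_self (h : IsCAR θ D) (i : σ) (p : R) :
    (D i + p • θ i) * (D i + p • θ i) = p • 1 := by
  simp only [add_mul, mul_add, smul_mul_assoc, mul_smul_comm, h.del_mul_self,
    h.theta_mul_self, smul_zero, zero_add, add_zero, ← h.del_theta_self i, smul_add]
  abel

theorem sub_smul_mul_self (h : IsCAR θ D) (i : σ) (p : R) :
    (D i - p • θ i) * (D i - p • θ i) = (-p) • 1 := by
  rw [sub_eq_add_neg, ← neg_smul, h.add_smul_mul_self]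

theorem sub_smul_anticomm_of_ne (h : IsCAR θ D) {i j : σ} (hij : i ≠ j) (p q : R) :
    (D i - p • θ i) * (D j - q • θ j) = -((D j - q • θ j) * (D i - p • θ i)) := by
  simp only [sub_eq_add_neg, ← neg_smul]
  exact eq_neg_of_add_eq_zero_left (h.anticomm_add_smul_of_ne hij _ _)

theorem anticomm_sum_smul_sub_smul [Fintype σ] (h : IsCAR θ D) (x b : σ → R) (i : σ) :
    (∑ j, (x j • D j + (b j * x j) • θ j)) * (D i - b i • θ i) +
      (D i - b i • θ i) * ∑ j, (x j • D j + (b j * x j) • θ j) = 0 := by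
  have hδ : ∑ j, (x j • D j + (b j * x j) • θ j) = ∑ j, x j • (D j + b j • θ j) := by
    simp only [smul_add, smul_smul, mul_comm]
  rw [hδ, Finset.sum_mul, Finset.mul_sum, ← Finset.sum_add_distrib, sub_eq_add_neg, ← neg_smul]
  refine Finset.sum_eq_zero fun j _ => ?_
  rw [smul_mul_assoc, mul_smul_comm, ← smul_add]
  rcases eq_or_ne j i with rfl | hji
  · rw [h.anticomm_add_smul_self, add_neg_cancel, zero_smul, smul_zero]
  · rw [h.anticomm_add_smul_of_ne hji, smul_zero]

end Scalars

theorem isUnit_add_mul (h : IsCAR θ D) (hγ : IsParityOperator γ θ D) (i : σ) :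
    IsUnit ((θ i + D i) * γ) := by
  have hsq : (θ i + D i) * (θ i + D i) = 1 := by
    rw [add_mul, mul_add, mul_add, h.theta_mul_self, h.del_mul_self, zero_add, add_zero,
      add_comm, h.del_theta_self]
  refine ⟨⟨(θ i + D i) * γ, γ * (θ i + D i), ?_, ?_⟩, rfl⟩
  · rw [mul_assoc, ← mul_assoc γ, hγ.mul_self, one_mul, hsq]
  · rw [mul_assoc, ← mul_assoc (θ i + D i), hsq, one_mul, hγ.mul_self]

theorem add_mul_mul_theta_self (h : IsCAR θ D) (hγ : IsParityOperator γ θ D) (i : σ) :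
    (θ i + D i) * γ * θ i = -D i * ((θ i + D i) * γ) := by
  rw [mul_assoc, hγ.anticomm_theta]
  simp only [mul_neg, neg_mul, add_mul, mul_add, ← mul_assoc, h.theta_mul_self, h.del_mul_self,
    zero_mul, zero_add, neg_zero, add_zero]

theorem commute_add_mul_theta (h : IsCAR θ D) (hγ : IsParityOperator γ θ D) {i j : σ}
    (hji : j ≠ i) : Commute ((θ j + D j) * γ) (θ i) := by
  have hθ := h.theta_anticomm hji
  have hDθ := h.del_theta_anticomm hji
  unfold Commute SemiconjBy
  rw [mul_assoc, hγ.anticomm_theta]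
  simp only [mul_neg, add_mul, mul_add, ← mul_assoc, hθ, hDθ, neg_mul, neg_add, neg_neg]

theorem add_mul_mul_del_self (h : IsCAR θ D) (hγ : IsParityOperator γ θ D) (i : σ) :
    (θ i + D i) * γ * D i = -θ i * ((θ i + D i) * γ) := by
  simpa only [add_comm (D i)] using h.swap.add_mul_mul_theta_self hγ.swap i

theorem commute_add_mul_del (h : IsCAR θ D) (hγ : IsParityOperator γ θ D) {i j : σ}
    (hji : j ≠ i) : Commute ((θ j + D j) * γ) (D i) := by
  simpa only [add_comm (D j)] using h.swap.commute_add_mul_theta hγ.swap hji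

theorem exists_isUnit_swap [Fintype σ] (h : IsCAR θ D) (hγ : IsParityOperator γ θ D) :
    ∃ U : S, IsUnit U ∧ (∀ i, U * θ i = -D i * U) ∧ ∀ i, U * D i = -θ i * U := by
  have hl := (Finset.univ : Finset σ).nodup_toList
  have hmem (i : σ) : i ∈ (Finset.univ : Finset σ).toList := by simp
  refine ⟨(Finset.univ.toList.map fun j => (θ j + D j) * γ).prod,
    List.prod_isUnit fun u hu => ?_, fun i => ?_, fun i => ?_⟩
  · obtain ⟨j, -, rfl⟩ := List.mem_map.mp hu
    exact h.isUnit_add_mul hγ j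
  · exact hl.prod_map_mul_eq_mul_prod_map (hmem i) (h.add_mul_mul_theta_self hγ i)
      (fun j hj => h.commute_add_mul_theta hγ hj)
      (fun j hj => (h.commute_add_mul_del hγ hj).neg_right)
  · exact hl.prod_map_mul_eq_mul_prod_map (hmem i) (h.add_mul_mul_del_self hγ i)
      (fun j hj => h.commute_add_mul_del hγ hj)
      (fun j hj => (h.commute_add_mul_theta hγ hj).neg_right)

end IsCAR

section Exterior

variable (R σ : Type*) [CommRing R] [Fintype σ] [DecidableEq σ]

theorem isCAR_mulLeft_contractLeft :
    IsCAR (fun i : σ => LinearMap.mulLeft R (ι (0 : QuadraticForm R (σ → R)) (Pi.single i 1)))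
      (fun i => contractLeft ((Pi.basisFun R σ).coord i)) where
  theta_mul_self i := LinearMap.ext fun x => by
    simp [← mul_assoc]
  del_mul_self i := LinearMap.ext fun x => contractLeft_contractLeft _ x
  theta_anticomm {i j} hij := LinearMap.ext fun x => by
    have ho : (0 : QuadraticForm R (σ → R)).IsOrtho (Pi.single i 1) (Pi.single j 1) := by
      simp [QuadraticMap.IsOrtho]
    simp only [Module.End.mul_apply, LinearMap.mulLeft_apply, LinearMap.neg_apply, ← mul_assoc]
    rw [eq_neg_of_add_eq_zero_left (ι_mul_ι_add_swap_of_isOrtho ho), neg_mul]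
  del_anticomm {i j} _ := LinearMap.ext fun x => contractLeft_comm _ _ x
  del_theta_self i := LinearMap.ext fun x => by
    simp [contractLeft_ι_mul]
  del_theta_anticomm {i j} hij := LinearMap.ext fun x => by
    simp [contractLeft_ι_mul, Pi.single_eq_of_ne hij]

theorem involute_contractLeft {M : Type*} [AddCommGroup M] [Module R M] {Q : QuadraticForm R M}
    (d : Module.Dual R M) (x : CliffordAlgebra Q) :
    involute (contractLeft d x) = -contractLeft d (involute x) := by
  induction x using CliffordAlgebra.left_induction with
  | algebraMap r => simp
  | add x y hx hy => simp only [map_add, hx, hy, neg_add]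
  | ι_mul m x hx =>
    simp only [contractLeft_ι_mul, map_sub, map_smul, map_mul, involute_ι, hx, neg_mul,
      mul_neg, neg_neg, map_neg, neg_sub]

theorem isParityOperator_involute :
    IsParityOperator (involute : CliffordAlgebra (0 : QuadraticForm R (σ → R)) →ₐ[R] _).toLinearMap
      (fun i : σ => LinearMap.mulLeft R (ι (0 : QuadraticForm R (σ → R)) (Pi.single i 1)))
      (fun i => contractLeft ((Pi.basisFun R σ).coord i)) where
  mul_self := LinearMap.ext fun x => involute_involute x
  anticomm_theta i := LinearMap.ext fun x => by simp
  anticomm_del i := LinearMap.ext fun x => by simp [involute_contractLeft]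

end Exterior

theorem exists_linearEquiv_exterior_ι_single_mul {R σ : Type*} [CommRing R] [Fintype σ]
    [DecidableEq σ] (c : σ → R) :
    ∃ ψ : CliffordAlgebra (QuadraticMap.weightedSumSquares R c) ≃ₗ[R]
        CliffordAlgebra (0 : QuadraticForm R (σ → R)),
      ∀ i y, ψ (ι _ (Pi.single i 1) * y) =
        ι _ (Pi.single i 1) * ψ y + c i • contractLeft ((Pi.basisFun R σ).coord i) (ψ y) := by
  set B : LinearMap.BilinForm R (σ → R) := Matrix.toLinearMap₂' R (Matrix.diagonal (-c))
  have hB : B.toQuadraticMap = 0 - QuadraticMap.weightedSumSquares R c := by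
    ext v
    simp [B, Matrix.toLinearMap₂'_apply', QuadraticMap.weightedSumSquares_apply, dotProduct,
      Matrix.mulVec_diagonal, mul_left_comm]
  have hBi (i : σ) : B (Pi.single i 1) = -c i • (Pi.basisFun R σ).coord i := by
    ext w
    rcases eq_or_ne i w with rfl | hiw
    · simp [B, Matrix.toLinearMap₂'_apply']
    · simp [B, Matrix.toLinearMap₂'_apply', hiw, hiw.symm]
  refine ⟨changeFormEquiv hB, fun i y => ?_⟩
  simp [changeForm_ι_mul, hBi, sub_eq_add_neg]

open scoped TensorProduct in
theorem exists_injective_cliffordAlgebra_baseChange {k R σ : Type*} [Field k] [CommRing R]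
    [Nontrivial R] [Algebra k R] [Fintype σ] [DecidableEq σ] (c : σ → k) :
    ∃ g : CliffordAlgebra (QuadraticMap.weightedSumSquares k c) →ₐ[k]
        CliffordAlgebra (QuadraticMap.weightedSumSquares R fun i => algebraMap k R (c i)),
      Function.Injective g ∧ ∀ i, g (ι _ (Pi.single i 1)) = ι _ (Pi.single i 1) := by
  set w := QuadraticMap.weightedSumSquares k c
  set Q := QuadraticMap.weightedSumSquares R fun i => algebraMap k R (c i)
  let L : (σ → k) →ₗ[k] (σ → R) := LinearMap.compLeft (Algebra.linearMap k R) σ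
  have hL (i : σ) : L (Pi.single i 1) = Pi.single i 1 := by
    ext j
    rcases eq_or_ne j i with rfl | hji <;> simp [L, *]
  have hQL (m : σ → k) : Q (L m) = algebraMap k R (w m) := by
    simp [Q, w, L, QuadraticMap.weightedSumSquares_apply]
  let g : CliffordAlgebra w →ₐ[k] CliffordAlgebra Q :=
    lift w ⟨(ι Q).restrictScalars k ∘ₗ L, fun m => by
      simp [ι_sq_scalar, hQL, ← IsScalarTower.algebraMap_apply]⟩
  let y : σ → R ⊗[k] CliffordAlgebra w := fun j => 1 ⊗ₜ ι w (Pi.single j 1)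
  have hy_sq (j : σ) : y j * y j = algebraMap R _ (algebraMap k R (c j)) := by
    have hw : w (Pi.single j 1) = c j := by
      simp [w, QuadraticMap.weightedSumSquares_apply, Pi.single_apply]
    rw [← IsScalarTower.algebraMap_apply, ← Algebra.TensorProduct.includeRight.commutes]
    simp only [y, Algebra.TensorProduct.tmul_mul_tmul, one_mul, ι_sq_scalar, hw]
    rfl
  have hy_anti {i j : σ} (hij : i ≠ j) : y i * y j = -(y j * y i) := by
    have ho : w.IsOrtho (Pi.single i 1) (Pi.single j 1) := by
      simp only [QuadraticMap.IsOrtho, w, QuadraticMap.weightedSumSquares_apply,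
        ← Finset.sum_add_distrib]
      refine Finset.sum_congr rfl fun l _ => ?_
      rcases eq_or_ne l i with rfl | hli
      · simp [hij]
      · rcases eq_or_ne l j with rfl | hlj <;> simp [*]
    refine eq_neg_of_add_eq_zero_left ?_
    simp only [y, Algebra.TensorProduct.tmul_mul_tmul, one_mul, ← TensorProduct.tmul_add,
      ι_mul_ι_add_swap_of_isOrtho ho, TensorProduct.tmul_zero]
  let toTensor : CliffordAlgebra Q →ₐ[R] R ⊗[k] CliffordAlgebra w :=
    lift Q ⟨Fintype.linearCombination R y, fun v => by
      rw [Fintype.linearCombination_apply, Finset.sum_mul_self_of_anticommute]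
      · simp only [Q, QuadraticMap.weightedSumSquares_apply, map_sum]
        refine Finset.sum_congr rfl fun j _ => ?_
        rw [smul_mul_smul_comm, hy_sq, Algebra.smul_def, smul_eq_mul, ← map_mul, mul_comm]
      · intro i _ j _ hij
        rw [smul_mul_smul_comm, smul_mul_smul_comm, hy_anti hij, smul_neg, mul_comm]⟩
  have hg : (toTensor.restrictScalars k).comp g = Algebra.TensorProduct.includeRight := by
    refine CliffordAlgebra.hom_ext (LinearMap.pi_ext' fun j => LinearMap.ext_ring ?_)
    simp only [LinearMap.comp_apply, LinearMap.coe_single, AlgHom.toLinearMap_apply,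
      AlgHom.comp_apply, AlgHom.coe_restrictScalars', g, lift_ι_apply,
      LinearMap.coe_restrictScalars, hL, Algebra.TensorProduct.includeRight_apply, toTensor]
    rw [Fintype.linearCombination_apply_single, one_smul]
  refine ⟨g, fun x x' hxx' => ?_, fun i => by simp [g, hL]⟩
  apply Algebra.TensorProduct.includeRight_injective (A := R) (algebraMap k R).injective
  rw [← hg]
  simp [hxx']

theorem mul_sub_smul_of_swap {R S : Type*} [CommRing R] [Ring S] [Algebra R S] {U x y : S}
    (hx : U * x = -y * U) (hy : U * y = -x * U) (p : R) :
    U * (x - p • y) = -(y - p • x) * U := by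
  rw [mul_sub, mul_smul_comm, hx, hy]
  simp only [neg_mul, sub_mul, smul_mul_assoc, smul_neg, neg_sub, sub_neg_eq_add]
  abel

theorem exists_injective_ringHom_cliffordAlgebra {k R σ : Type*} [Field k] [CommRing R]
    [Nontrivial R] [Algebra k R] [Fintype σ] [DecidableEq σ] (a : σ → k) :
    ∃ F : CliffordAlgebra (QuadraticMap.weightedSumSquares k fun i => -(a i)) →+*
        Module.End R (CliffordAlgebra (0 : QuadraticForm R (σ → R))),
      Function.Injective F ∧
      (∀ c : k, F (algebraMap k _ c) = algebraMap k R c • (1 : Module.End R _)) ∧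
      ∀ i, F (ι _ (Pi.single i 1)) = contractLeft ((Pi.basisFun R σ).coord i) -
        algebraMap k R (a i) •
          LinearMap.mulLeft R (ι (0 : QuadraticForm R (σ → R)) (Pi.single i 1)) := by
  obtain ⟨g, hg, hgι⟩ := exists_injective_cliffordAlgebra_baseChange (R := R) fun i => -(a i)
  obtain ⟨ψ, hψ⟩ := exists_linearEquiv_exterior_ι_single_mul fun i => algebraMap k R (-(a i))
  obtain ⟨U, hU, hUθ, hUD⟩ :=
    (isCAR_mulLeft_contractLeft R σ).exists_isUnit_swap (isParityOperator_involute R σ)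
  let e := ψ.trans (LinearMap.GeneralLinearGroup.toLinearEquiv hU.unit)
  have hconj (i : σ) : e.conjAlgEquiv R (Algebra.lmul R _ (ι _ (Pi.single i 1))) =
      -(contractLeft ((Pi.basisFun R σ).coord i) -
        algebraMap k R (a i) •
          LinearMap.mulLeft R (ι (0 : QuadraticForm R (σ → R)) (Pi.single i 1))) := by
    refine LinearMap.ext fun z => ?_
    obtain ⟨y, rfl⟩ := e.surjective z
    rw [LinearEquiv.conjAlgEquiv_apply, LinearMap.comp_apply, LinearMap.comp_apply,
      LinearEquiv.coe_coe, LinearEquiv.coe_coe, e.symm_apply_apply]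
    show U (ψ (ι _ (Pi.single i 1) * y)) = _
    rw [hψ, map_neg, neg_smul, ← sub_eq_add_neg]
    exact LinearMap.congr_fun (mul_sub_smul_of_swap (hUθ i) (hUD i) (algebraMap k R (a i)))
      (ψ y)
  refine ⟨(e.conjAlgEquiv R).toRingHom.comp ((Algebra.lmul R _).toRingHom.comp
    ((involute : _ →ₐ[R] _).toRingHom.comp g.toRingHom)),
    (e.conjAlgEquiv R).injective.comp (Algebra.lmul_injective.comp
      (involute_involutive.injective.comp hg)), fun c => ?_, fun i => ?_⟩
  · show e.conjAlgEquiv R (Algebra.lmul R _ (involute (g (algebraMap k _ c)))) = _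
    rw [g.commutes, IsScalarTower.algebraMap_apply k R, AlgHom.commutes, AlgHom.commutes,
      AlgEquiv.commutes, Algebra.algebraMap_eq_smul_one]
  · show e.conjAlgEquiv R (Algebra.lmul R _ (involute (g (ι _ (Pi.single i 1))))) = _
    rw [hgι, involute_ι, map_neg, map_neg, hconj, neg_neg]

theorem clifford_relations_in_stabilized_endomorphism_algebra_general
    (k : Type) [Field k] (n : ℕ) (a : Fin n → k) :
    let R := MvPowerSeries (Fin n) k
    let E := CliffordAlgebra (0 : QuadraticForm R (Fin n → R))
    let θ : Fin n → Module.End R E := fun i =>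
      LinearMap.mulLeft R (ι (0 : QuadraticForm R (Fin n → R)) (Pi.single i 1))
    let Dop : Fin n → Module.End R E := fun i =>
      contractLeft ((Pi.basisFun R (Fin n)).coord i)
    let δ : Module.End R E := ∑ i, ((MvPowerSeries.X i : R) • Dop i +
      ((algebraMap k R (a i)) * MvPowerSeries.X i) • θ i)
    let Dbar : Fin n → Module.End R E := fun i => Dop i - (algebraMap k R (a i)) • θ i
    (∀ i, δ * Dbar i + Dbar i * δ = 0) ∧
    (∀ i, Dbar i * Dbar i = algebraMap k R (-(a i)) • (1 : Module.End R E)) ∧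
    (∀ i j, i ≠ j → Dbar i * Dbar j = -(Dbar j * Dbar i)) ∧
    ∃ F : CliffordAlgebra (QuadraticMap.weightedSumSquares k (fun i => -(a i))) →+*
        Module.End R E,
      Function.Injective F ∧
      (∀ c : k, F (algebraMap k _ c) = algebraMap k R c • (1 : Module.End R E)) ∧
      (∀ i, F (CliffordAlgebra.ι (QuadraticMap.weightedSumSquares k (fun i => -(a i)))
        (Pi.single i 1)) = Dbar i) := by
  intro R E θ Dop δ Dbar
  have h := isCAR_mulLeft_contractLeft R (Fin n)
  refine ⟨fun i => ?_, fun i => ?_, fun i j hij => ?_, ?_⟩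
  · exact h.anticomm_sum_smul_sub_smul MvPowerSeries.X (fun j => algebraMap k R (a j)) i
  · rw [map_neg]
    exact h.sub_smul_mul_self i (algebraMap k R (a i))
  · exact h.sub_smul_anticomm_of_ne hij (algebraMap k R (a i)) (algebraMap k R (a j))
  · exact exists_injective_ringHom_cliffordAlgebra (R := R) a

/-- Let `char k ≠ 2` and `w = Σ aᵢxᵢ²` a diagonal quadratic form over `R = k[[x₁,…,xₙ]]`.
In the dg algebra `A = End_R(⋀•(Rⁿ))` of (`R`-linear differential) operators on
`R⟨θ₁,…,θₙ⟩ = ⋀•(Rⁿ)`, with `θᵢ` exterior multiplication by the `i`-th basis vector, `∂ᵢ`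
contraction with the `i`-th coordinate, and differential the supercommutator with
`δ = Σᵢ (xᵢ∂ᵢ + aᵢxᵢθᵢ)`, the elements `∂̄ᵢ = ∂ᵢ − aᵢθᵢ` are cycles (`δ∂̄ᵢ + ∂̄ᵢδ = 0`)
satisfying `∂̄ᵢ² = −aᵢ` and `∂̄ᵢ∂̄ⱼ = −∂̄ⱼ∂̄ᵢ` for `i ≠ j`; hence they generate a subalgebra
isomorphic to the Clifford algebra of the quadratic form with weights `−aᵢ`. -/
theorem clifford_relations_in_stabilized_endomorphism_algebra
    (k : Type) [Field k] (hchar : (2 : k) ≠ 0) (n : ℕ) (a : Fin n → k) :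
    let R := MvPowerSeries (Fin n) k
    let E := CliffordAlgebra (0 : QuadraticForm R (Fin n → R))
    let θ : Fin n → Module.End R E := fun i =>
      LinearMap.mulLeft R (ι (0 : QuadraticForm R (Fin n → R)) (Pi.single i 1))
    let Dop : Fin n → Module.End R E := fun i =>
      contractLeft ((Pi.basisFun R (Fin n)).coord i)
    let δ : Module.End R E := ∑ i, ((MvPowerSeries.X i : R) • Dop i +
      ((algebraMap k R (a i)) * MvPowerSeries.X i) • θ i)
    let Dbar : Fin n → Module.End R E := fun i => Dop i - (algebraMap k R (a i)) • θ i
    (∀ i, δ * Dbar i + Dbar i * δ = 0) ∧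
    (∀ i, Dbar i * Dbar i = algebraMap k R (-(a i)) • (1 : Module.End R E)) ∧
    (∀ i j, i ≠ j → Dbar i * Dbar j = -(Dbar j * Dbar i)) ∧
    ∃ F : CliffordAlgebra (QuadraticMap.weightedSumSquares k (fun i => -(a i))) →+*
        Module.End R E,
      Function.Injective F ∧
      (∀ c : k, F (algebraMap k _ c) = algebraMap k R c • (1 : Module.End R E)) ∧
      (∀ i, F (CliffordAlgebra.ι (QuadraticMap.weightedSumSquares k (fun i => -(a i)))
        (Pi.single i 1)) = Dbar i) :=
  clifford_relations_in_stabilized_endomorphism_algebra_general k n a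
end
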